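/- Let A ∈ M₂(ℝ) with A ≠ 0 and det A = 0, and let a₀, a₁ be real numbers with 4a₀ − a₁² > 0. Then the equation X² + a₁X + a₀I = A has no solution X ∈ M₂(ℝ). -/

import Mathlib

/-!
Completing the square turns the equation into `Y ^ 2 + c • 1 = A` with `Y = X + (a₁ / 2) • 1` and
`c = a₀ - (a₁ / 2) ^ 2 > 0`. For a `2 × 2` matrix `Y` with trace `t` and determinant `d`,
`det (Y ^ 2 + c • 1) = (d - c) ^ 2 + c * t ^ 2` (this is `|χ_Y(i √c)|²`), so `det A = 0` forces
`t = 0` and `d = c`, and then Cayley–Hamilton gives `A = Y ^ 2 - t • Y + d • 1 = 0`.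
-/

theorem sq_add_smul_add_smul_one {K A : Type*} [Field K] [Ring A] [Algebra K A]
    (h2 : (2 : K) ≠ 0) (x : A) (a₀ a₁ : K) :
    x ^ 2 + a₁ • x + a₀ • (1 : A) = (x + (a₁ / 2) • 1) ^ 2 + (a₀ - (a₁ / 2) ^ 2) • 1 := by
  simp only [sq, add_mul, mul_add, smul_mul_assoc, mul_smul_comm, mul_one, one_mul]
  match_scalars <;> field_simp <;> ring

namespace Matrix

variable {R : Type*} [CommRing R]

theorem sq_fin_two_eq_trace_smul_sub_det_smul (M : Matrix (Fin 2) (Fin 2) R) :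
    M ^ 2 = M.trace • M - M.det • (1 : Matrix (Fin 2) (Fin 2) R) := by
  ext i j
  fin_cases i <;> fin_cases j <;> simp [sq, mul_apply, trace_fin_two, det_fin_two] <;> ring

theorem det_sq_add_smul_one_fin_two (M : Matrix (Fin 2) (Fin 2) R) (c : R) :
    (M ^ 2 + c • (1 : Matrix (Fin 2) (Fin 2) R)).det = (M.det - c) ^ 2 + c * M.trace ^ 2 := by
  simp [det_fin_two, trace_fin_two, sq, mul_apply]
  ring

theorem sq_add_smul_one_eq_zero_of_det_eq_zero {M : Matrix (Fin 2) (Fin 2) ℝ} {c : ℝ}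
    (hc : 0 < c) (hdet : (M ^ 2 + c • (1 : Matrix (Fin 2) (Fin 2) ℝ)).det = 0) :
    M ^ 2 + c • (1 : Matrix (Fin 2) (Fin 2) ℝ) = 0 := by
  rw [det_sq_add_smul_one_fin_two] at hdet
  obtain ⟨hd, ht⟩ := (add_eq_zero_iff_of_nonneg (by positivity) (by positivity)).1 hdet
  have hdet_eq : M.det = c := sub_eq_zero.1 (pow_eq_zero_iff two_ne_zero |>.1 hd)
  have htrace : M.trace = 0 :=
    pow_eq_zero_iff two_ne_zero |>.1 ((mul_eq_zero.1 ht).resolve_left hc.ne')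
  rw [sq_fin_two_eq_trace_smul_sub_det_smul, htrace, hdet_eq, zero_smul, zero_sub,
    neg_add_cancel]

end Matrix

theorem stmt_17 (A : Matrix (Fin 2) (Fin 2) ℝ) (hA : A ≠ 0) (hdet : A.det = 0)
    (a₀ a₁ : ℝ) (h : 0 < 4 * a₀ - a₁ ^ 2) :
    ¬ ∃ X : Matrix (Fin 2) (Fin 2) ℝ,
      X ^ 2 + a₁ • X + a₀ • (1 : Matrix (Fin 2) (Fin 2) ℝ) = A := by
  rintro ⟨X, rfl⟩
  rw [sq_add_smul_add_smul_one two_ne_zero] at hA hdet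
  have hc : 0 < a₀ - (a₁ / 2) ^ 2 := by linarith
  exact hA (Matrix.sq_add_smul_one_eq_zero_of_det_eq_zero hc hdet)
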